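/- Specialize to N = 2 interference sources, κ = 1, ρ = 0, σ₀² = σ₁² = σ₂² = 1, τ₁ = τ₂ = 1/2, and ‖h₀‖² = ‖h₁‖² = ‖h₂‖² = M. Then for j = 1, 2 and every v > 0, the Riemannian output SIR equals SIR_j(Γ_R(v)) = √(M/v + 1), while the Euclidean output SIR equals SIR_j(Γ_E(v)) = 2(M + v)/(M + 2v). In particular, as v → 0⁺ (or as M → ∞), SIR_j(Γ_R(v)) → ∞ while SIR_j(Γ_E(v)) stays bounded (tending to 2). -/

import Mathlib

open Matrix Finset Filter Topology

noncomputable section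

/-- squared Euclidean norm of a complex vector. -/
def nsq {M : ℕ} (x : Fin M → ℂ) : ℝ := ∑ i, Complex.normSq (x i)

/-- outer product `x x*`. -/
def outerP {M : ℕ} (x : Fin M → ℂ) : Matrix (Fin M) (Fin M) ℂ :=
  Matrix.vecMulVec x (star x)

/-- the (real) quadratic form `d* A d`. -/
def quadForm {M : ℕ} (d : Fin M → ℂ) (A : Matrix (Fin M) (Fin M) ℂ) : ℝ :=
  (star d ⬝ᵥ (A *ᵥ d)).re

/-- `Γ(c, v) = σ₀² h₀h₀* + ∑ l, c_l h_l h_l* + v I`.  Index `0` is the desired source and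
index `l.succ` is the `l`-th interference. -/
def Gam {M N : ℕ} (h : Fin (N + 1) → Fin M → ℂ) (σ0sq : ℝ) (c : Fin N → ℝ) (v : ℝ) :
    Matrix (Fin M) (Fin M) ℂ :=
  σ0sq • outerP (h 0) + ∑ l : Fin N, c l • outerP (h l.succ)
    + v • (1 : Matrix (Fin M) (Fin M) ℂ)

/-- output SIR toward interference `j`: `q(d₀, Γ) / q(d_j, Γ)`. -/
def SIRj {M N : ℕ} (d : Fin (N + 1) → Fin M → ℂ) (j : Fin N)
    (A : Matrix (Fin M) (Fin M) ℂ) : ℝ :=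
  quadForm (d 0) A / quadForm (d j.succ) A

/-- the Riemannian interference coefficients
`c_l^R(v) = ((σ_l²‖h_l‖² + v)^{τ_l} v^{1-τ_l} - v)/‖h_l‖²`. -/
def cRcoef {M N : ℕ} (h : Fin (N + 1) → Fin M → ℂ) (σsq τ : Fin N → ℝ) (v : ℝ)
    (l : Fin N) : ℝ :=
  ((σsq l * nsq (h l.succ) + v) ^ (τ l) * v ^ (1 - τ l) - v) / nsq (h l.succ)

lemma quadForm_add {M : ℕ} (x : Fin M → ℂ) (A B : Matrix (Fin M) (Fin M) ℂ) :
    quadForm x (A + B) = quadForm x A + quadForm x B := by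
  simp [quadForm, add_mulVec, dotProduct_add]

lemma quadForm_smul {M : ℕ} (r : ℝ) (x : Fin M → ℂ) (A : Matrix (Fin M) (Fin M) ℂ) :
    quadForm x (r • A) = r * quadForm x A := by
  simp [quadForm, smul_mulVec, dotProduct_smul, Complex.smul_re]

lemma quadForm_outerP {M : ℕ} (d x : Fin M → ℂ) :
    quadForm d (outerP x) = ‖star d ⬝ᵥ x‖ ^ 2 := by
  have h1 : outerP x *ᵥ d = (star x ⬝ᵥ d) • x := by
    ext i
    simp [outerP, vecMulVec, mulVec, dotProduct, Finset.mul_sum, mul_comm, mul_left_comm]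
  have h2 : star x ⬝ᵥ d = star (star d ⬝ᵥ x) := by simp [dotProduct, mul_comm]
  rw [quadForm, h1, dotProduct_smul, h2, smul_eq_mul, mul_comm,
    Complex.star_def, Complex.mul_conj, Complex.ofReal_re, Complex.normSq_eq_norm_sq]

lemma quadForm_one {M : ℕ} (x : Fin M → ℂ) :
    quadForm x (1 : Matrix (Fin M) (Fin M) ℂ) = nsq x := by
  have : star x ⬝ᵥ x = ((nsq x : ℝ) : ℂ) := by
    simp [dotProduct, nsq, Complex.normSq_eq_conj_mul_self]
  simp [quadForm, Matrix.one_mulVec, this]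

lemma quadForm_Gam2 {M : ℕ} (h : Fin (2 + 1) → Fin M → ℂ) (c : Fin 2 → ℝ) (v : ℝ)
    (x : Fin M → ℂ) :
    quadForm x (Gam h 1 c v)
      = ‖star x ⬝ᵥ h 0‖ ^ 2 + (c 0 * ‖star x ⬝ᵥ h (0 : Fin 2).succ‖ ^ 2
        + c 1 * ‖star x ⬝ᵥ h (1 : Fin 2).succ‖ ^ 2) + v * nsq x := by
  rw [Gam, Fin.sum_univ_two, quadForm_add, quadForm_add, quadForm_add,
    quadForm_smul, quadForm_smul, quadForm_smul, quadForm_smul, quadForm_outerP,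
    quadForm_outerP, quadForm_outerP, quadForm_one]
  ring

lemma sqrt_tendsto_atTop : Tendsto Real.sqrt atTop atTop := by
  apply tendsto_atTop_atTop.mpr
  intro b
  refine ⟨max 0 (b ^ 2), fun a ha => ?_⟩
  have h0 : (0 : ℝ) ≤ a := le_trans (le_max_left _ _) ha
  have h1 : b ^ 2 ≤ a := le_trans (le_max_right _ _) ha
  nlinarith [Real.sq_sqrt h0, Real.sqrt_nonneg a]

/-- In the anechoic example with `N = 2`, `κ = 1`, `ρ = 0`,
`σ₀² = σ₁² = σ₂² = 1`, `τ₁ = τ₂ = 1/2` and `‖h₀‖² = ‖h₁‖² = ‖h₂‖² = M`: for `j = 1, 2`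
and every `v > 0`, `SIR_j(Γ_R(v)) = √(M/v + 1)` and `SIR_j(Γ_E(v)) = 2(M+v)/(M+2v)`;
as `v → 0⁺` the Riemannian SIR tends to `∞` while the Euclidean one tends to `2`. -/
theorem anechoic_example_SIR
    (M : ℕ) (hM : 1 ≤ M)
    (h : Fin (2 + 1) → Fin M → ℂ)
    (hnz : ∀ r, h r ≠ 0)
    (horth : ∀ r s, r ≠ s → star (h r) ⬝ᵥ h s = 0)
    (hhn : ∀ r, nsq (h r) = M)
    (d : Fin (2 + 1) → Fin M → ℂ)
    (hd : ∀ r, nsq (d r) = M)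
    (hdr : ∀ r, ‖star (d r) ⬝ᵥ h r‖ ^ 2 = 1 * M * nsq (h r))
    (hds : ∀ r s, r ≠ s → ‖star (d r) ⬝ᵥ h s‖ ^ 2 = 0 * M * nsq (h s))
    (ΓR ΓE : ℝ → Matrix (Fin M) (Fin M) ℂ)
    (hΓR : ∀ v, ΓR v
      = Gam h 1 (cRcoef h (fun _ : Fin 2 => 1) (fun _ : Fin 2 => 1 / 2) v) v)
    (hΓE : ∀ v, ΓE v = Gam h 1 (fun _ : Fin 2 => 1 * (1 / 2)) v) :
    (∀ v : ℝ, 0 < v → ∀ j : Fin 2,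
      SIRj d j (ΓR v) = Real.sqrt (M / v + 1) ∧
      SIRj d j (ΓE v) = 2 * (M + v) / (M + 2 * v)) ∧
    (∀ j : Fin 2,
      Tendsto (fun v => SIRj d j (ΓR v)) (𝓝[>] (0 : ℝ)) atTop ∧
      Tendsto (fun v => SIRj d j (ΓE v)) (𝓝[>] (0 : ℝ)) (𝓝 2)) := by
  set m : ℝ := (M : ℝ) with hm
  have hm0 : (0 : ℝ) < m := by
    rw [hm]; exact_mod_cast Nat.lt_of_lt_of_le Nat.zero_lt_one hM
  -- numerator: quadForm (d 0) (Gam h 1 c v) = m * (m + v)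
  have num : ∀ (c : Fin 2 → ℝ) (v : ℝ),
      quadForm (d 0) (Gam h 1 c v) = m * (m + v) := by
    intro c v
    rw [quadForm_Gam2, hdr 0, hds 0 (0 : Fin 2).succ (by decide),
      hds 0 (1 : Fin 2).succ (by decide), hhn, hhn, hhn, hd]
    ring
  -- denominator: quadForm (d j.succ) (Gam h 1 c v) = c j * m^2 + v * m
  have den : ∀ (c : Fin 2 → ℝ) (v : ℝ) (j : Fin 2),
      quadForm (d j.succ) (Gam h 1 c v) = c j * (m * m) + v * m := by
    intro c v j
    have hj : j = 0 ∨ j = 1 := by omega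
    rcases hj with rfl | rfl
    · rw [quadForm_Gam2, hds (0 : Fin 2).succ 0 (by decide),
        hdr, hds (0 : Fin 2).succ (1 : Fin 2).succ (by decide), hhn, hhn, hhn, hd]
      ring
    · rw [quadForm_Gam2, hds (1 : Fin 2).succ 0 (by decide),
        hds (1 : Fin 2).succ (0 : Fin 2).succ (by decide), hdr, hhn, hhn, hhn, hd]
      ring
  have main : ∀ v : ℝ, 0 < v → ∀ j : Fin 2,
      SIRj d j (ΓR v) = Real.sqrt (M / v + 1) ∧
      SIRj d j (ΓE v) = 2 * (M + v) / (M + 2 * v) := by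
    intro v hv j
    have hmv : (0 : ℝ) < m + v := by linarith
    have hsv : (0 : ℝ) < Real.sqrt v := Real.sqrt_pos.mpr hv
    have hsmv : (0 : ℝ) < Real.sqrt (m + v) := Real.sqrt_pos.mpr hmv
    constructor
    · -- Riemannian
      have hc : cRcoef h (fun _ : Fin 2 => 1) (fun _ : Fin 2 => 1 / 2) v j
          = (Real.sqrt (m + v) * Real.sqrt v - v) / m := by
        rw [cRcoef, hhn]
        norm_num [Real.sqrt_eq_rpow]
      rw [hΓR, SIRj, num, den, hc]
      have hden : (Real.sqrt (m + v) * Real.sqrt v - v) / m * (m * m) + v * m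
          = m * (Real.sqrt (m + v) * Real.sqrt v) := by
        field_simp
        ring
      rw [hden]
      have h1 : Real.sqrt (m / v + 1) = Real.sqrt (m + v) / Real.sqrt v := by
        rw [show m / v + 1 = (m + v) / v by field_simp, Real.sqrt_div hmv.le]
      rw [h1]
      have e1 : Real.sqrt (m + v) * Real.sqrt (m + v) = m + v :=
        Real.mul_self_sqrt hmv.le
      rw [div_eq_div_iff (by positivity) hsv.ne']
      linear_combination (-(m * Real.sqrt v)) * e1
    · -- Euclidean
      rw [hΓE, SIRj, num, den]
      rw [div_eq_div_iff (by nlinarith) (by nlinarith)]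
      ring
  refine ⟨main, fun j => ⟨?_, ?_⟩⟩
  · have h1 : Tendsto (fun v : ℝ => Real.sqrt (m / v + 1)) (𝓝[>] (0 : ℝ)) atTop := by
      have h2 : Tendsto (fun v : ℝ => m / v + 1) (𝓝[>] (0 : ℝ)) atTop := by
        apply tendsto_atTop_add_const_right
        exact (tendsto_inv_nhdsGT_zero.const_mul_atTop hm0).congr (fun x => (div_eq_mul_inv m x).symm)
      exact sqrt_tendsto_atTop.comp h2
    refine h1.congr' ?_
    filter_upwards [self_mem_nhdsWithin] with v hv
    exact ((main v hv j).1).symm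
  · have h2 : Tendsto (fun v : ℝ => 2 * (m + v) / (m + 2 * v)) (𝓝 (0 : ℝ))
        (𝓝 (2 * (m + 0) / (m + 2 * 0))) := by
      apply Tendsto.div
      · exact (tendsto_const_nhds.add tendsto_id).const_mul 2
      · exact (tendsto_const_nhds.add (tendsto_id.const_mul 2))
      · simpa using hm0.ne'
    have h3 : Tendsto (fun v : ℝ => 2 * (m + v) / (m + 2 * v)) (𝓝[>] (0 : ℝ)) (𝓝 2) := by
      have := tendsto_nhdsWithin_of_tendsto_nhds (s := Set.Ioi 0) h2
      simpa [hm0.ne'] using this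
    refine h3.congr' ?_
    filter_upwards [self_mem_nhdsWithin] with v hv
    exact ((main v hv j).2).symm
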